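/- Drezner–Wesolowsky formula: for t₁, t₂ ∈ ℝ and ρ ∈ (-1,1), Φ_ρ(t₁,t₂) = (1/(2π))∫₀^ρ (1/√(1-r²))·exp(-(t₁² - 2rt₁t₂ + t₂²)/(2(1-r²))) dr + Φ(t₁)Φ(t₂). -/

import Mathlib

/-- Standard normal CDF. -/
noncomputable def stdNormalCDF (t : ℝ) : ℝ :=
  ∫ x in Set.Iic t, (1 / Real.sqrt (2 * Real.pi)) * Real.exp (-x ^ 2 / 2)

/-- Standard bivariate normal density with correlation `ρ`. -/
noncomputable def biNormalDensity (ρ x y : ℝ) : ℝ :=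
  (1 / (2 * Real.pi * Real.sqrt (1 - ρ ^ 2))) *
    Real.exp (-(x ^ 2 - 2 * ρ * x * y + y ^ 2) / (2 * (1 - ρ ^ 2)))

/-- `Φ_ρ(t₁, t₂) = P[X ≤ t₁ ∧ Y ≤ t₂]` for jointly standard Gaussian `(X, Y)` with
correlation `ρ`.  For `ρ = ±1` the (degenerate) joint distribution gives the
indicated closed forms; for `ρ ∈ (-1, 1)` it is the double integral of the density. -/
noncomputable def biNormalCDF (ρ t₁ t₂ : ℝ) : ℝ :=
  if ρ = 1 then stdNormalCDF (min t₁ t₂)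
  else if ρ = -1 then max (stdNormalCDF t₁ + stdNormalCDF t₂ - 1) 0
  else ∫ x in Set.Iic t₁, ∫ y in Set.Iic t₂, biNormalDensity ρ x y

/-!
Integrating out `y` first (given `X = x`, `Y` is normal with mean `ρ x` and variance `1 - ρ²`)
gives `Φ_ρ(t₁, t₂) = ∫_{x ≤ t₁} φ(x) Φ((t₂ - ρ x) / √(1 - ρ²)) dx`. Differentiating under the
integral sign, the `ρ`-derivative of the integrand turns out to be the `x`-derivative of
`x ↦ φ_ρ(x, t₂)`, so `∂_ρ Φ_ρ(t₁, t₂) = φ_ρ(t₁, t₂)` (Plackett's identity). Integrating this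
from `0`, where `Φ_0(t₁, t₂) = Φ(t₁) Φ(t₂)`, gives the formula.
-/

open MeasureTheory ProbabilityTheory Real Set Filter Topology

local notation "φ" => gaussianPDFReal 0 1

lemma gaussianPDFReal_zero_one (x : ℝ) : φ x = 1 / √(2 * π) * exp (-x ^ 2 / 2) := by
  simp [gaussianPDFReal]

lemma continuous_gaussianPDFReal_zero_one : Continuous φ := by
  simp only [gaussianPDFReal_def]
  fun_prop

lemma gaussianPDFReal_zero_one_le_one (x : ℝ) : φ x ≤ 1 := by
  rw [gaussianPDFReal_zero_one, one_div]
  refine mul_le_one₀ (inv_le_one_of_one_le₀ ?_) (exp_nonneg _) (exp_le_one_iff.2 (by nlinarith))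
  exact one_le_sqrt.2 (by nlinarith [pi_gt_three])

lemma integrable_abs_mul_gaussianPDFReal_zero_one : Integrable fun x ↦ |x| * φ x := by
  have h := (integrable_mul_exp_neg_mul_sq (b := 1 / 2) one_half_pos).norm.const_mul
    (1 / √(2 * π))
  refine h.congr (ae_of_all _ fun x ↦ ?_)
  simp only [gaussianPDFReal_zero_one, norm_mul, norm_eq_abs, abs_exp]
  ring_nf

lemma stdNormalCDF_eq_integral (t : ℝ) : stdNormalCDF t = ∫ x in Iic t, φ x := by
  simp only [stdNormalCDF, gaussianPDFReal_zero_one]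

lemma stdNormalCDF_eq_cdf (t : ℝ) : stdNormalCDF t = cdf (gaussianReal 0 1) t := by
  rw [cdf_eq_real, measureReal_def, gaussianReal_apply_eq_integral _ one_ne_zero,
    ENNReal.toReal_ofReal
      (setIntegral_nonneg measurableSet_Iic fun x _ ↦ gaussianPDFReal_nonneg _ _ x),
    stdNormalCDF_eq_integral]

lemma hasDerivAt_stdNormalCDF (t : ℝ) : HasDerivAt stdNormalCDF (φ t) t := by
  have hint := integrable_gaussianPDFReal 0 1
  have h : stdNormalCDF = fun s ↦ stdNormalCDF 0 + ∫ x in (0 : ℝ)..s, φ x := by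
    ext s
    rw [stdNormalCDF_eq_integral, stdNormalCDF_eq_integral,
      ← intervalIntegral.integral_Iic_sub_Iic hint.integrableOn hint.integrableOn]
    ring
  rw [h]
  exact (intervalIntegral.integral_hasDerivAt_right
    (continuous_gaussianPDFReal_zero_one.intervalIntegrable _ _)
    (continuous_gaussianPDFReal_zero_one.stronglyMeasurableAtFilter _ _)
    continuous_gaussianPDFReal_zero_one.continuousAt).const_add _

lemma continuous_stdNormalCDF : Continuous stdNormalCDF :=
  continuous_iff_continuousAt.2 fun t ↦ (hasDerivAt_stdNormalCDF t).continuousAt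

lemma integral_Iic_gaussianPDFReal_zero_one_comp_affine {c : ℝ} (hc : 0 < c) (a t : ℝ) :
    ∫ y in Iic t, φ ((y - a) / c) / c = stdNormalCDF ((t - a) / c) := by
  have hint : Integrable fun y ↦ φ ((y - a) / c) / c :=
    (((integrable_gaussianPDFReal 0 1).comp_div hc.ne').comp_sub_right a).div_const c
  have hderiv (y : ℝ) :
      HasDerivAt (fun y ↦ stdNormalCDF ((y - a) / c)) (φ ((y - a) / c) / c) y := by
    have h := (hasDerivAt_stdNormalCDF ((y - a) / c)).comp y
      (((hasDerivAt_id' y).sub_const a).div_const c)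
    rwa [one_div, ← div_eq_mul_inv] at h
  have hlim : Tendsto (fun y ↦ stdNormalCDF ((y - a) / c)) atBot (𝓝 0) := by
    simp only [stdNormalCDF_eq_cdf]
    exact (tendsto_cdf_atBot _).comp
      ((tendsto_atBot_add_const_right _ (-a) tendsto_id).atBot_div_const hc)
  simpa using integral_Iic_of_hasDerivAt_of_tendsto' (fun y _ ↦ hderiv y) hint.integrableOn hlim

lemma biNormalDensity_eq_mul {r : ℝ} (hr : r ^ 2 < 1) (x y : ℝ) :
    biNormalDensity r x y = φ x * (φ ((y - r * x) / √(1 - r ^ 2)) / √(1 - r ^ 2)) := by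
  have h1 : 0 < 1 - r ^ 2 := by linarith
  have hexp : -(x ^ 2 - 2 * r * x * y + y ^ 2) / (2 * (1 - r ^ 2))
      = -x ^ 2 / 2 + -((y - r * x) / √(1 - r ^ 2)) ^ 2 / 2 := by
    rw [div_pow, sq_sqrt h1.le]
    field_simp
    ring
  rw [biNormalDensity, gaussianPDFReal_zero_one, gaussianPDFReal_zero_one, hexp, exp_add]
  field_simp
  exact sq_sqrt (by positivity)

lemma biNormalDensity_le {r : ℝ} (hr : r ^ 2 < 1) (x y : ℝ) :
    biNormalDensity r x y ≤ φ x / √(1 - r ^ 2) := by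
  rw [biNormalDensity_eq_mul hr, ← mul_div_assoc]
  gcongr
  exact mul_le_of_le_one_right (gaussianPDFReal_nonneg _ _ _) (gaussianPDFReal_zero_one_le_one _)

lemma biNormalDensity_nonneg (r x y : ℝ) : 0 ≤ biNormalDensity r x y := by
  unfold biNormalDensity
  positivity

lemma continuousOn_biNormalDensity (x y : ℝ) :
    ContinuousOn (fun ρ ↦ biNormalDensity ρ x y) (Ioo (-1) 1) := by
  intro ρ hρ
  have h1 : 0 < 1 - ρ ^ 2 := by nlinarith [hρ.1, hρ.2]
  unfold biNormalDensity
  apply ContinuousAt.continuousWithinAt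
  fun_prop (disch := positivity)

lemma integrable_biNormalDensity_left {r : ℝ} (hr : r ^ 2 < 1) (y : ℝ) :
    Integrable fun x ↦ biNormalDensity r x y := by
  refine ((integrable_gaussianPDFReal 0 1).div_const √(1 - r ^ 2)).mono'
    (by unfold biNormalDensity; fun_prop : Continuous _).aestronglyMeasurable
    (ae_of_all _ fun x ↦ ?_)
  rw [norm_of_nonneg (biNormalDensity_nonneg _ _ _)]
  exact biNormalDensity_le hr x y

lemma biNormalCDF_eq_integral {r : ℝ} (hr : r ∈ Ioo (-1) 1) (t₁ t₂ : ℝ) :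
    biNormalCDF r t₁ t₂ = ∫ x in Iic t₁, φ x * stdNormalCDF ((t₂ - r * x) / √(1 - r ^ 2)) := by
  have hr2 : r ^ 2 < 1 := (sq_lt_one_iff_abs_lt_one r).2 (abs_lt.2 hr)
  rw [biNormalCDF, if_neg hr.2.ne, if_neg hr.1.ne']
  refine integral_congr_ae (ae_of_all _ fun x ↦ ?_)
  simp only [biNormalDensity_eq_mul hr2, integral_const_mul]
  rw [integral_Iic_gaussianPDFReal_zero_one_comp_affine (sqrt_pos.2 (by linarith))]

lemma biNormalCDF_zero (t₁ t₂ : ℝ) : biNormalCDF 0 t₁ t₂ = stdNormalCDF t₁ * stdNormalCDF t₂ := by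
  simp [biNormalCDF_eq_integral (show (0 : ℝ) ∈ Ioo (-1) 1 by norm_num), integral_mul_const,
    stdNormalCDF_eq_integral]

lemma hasDerivAt_biNormalDensity_left (r x y : ℝ) :
    HasDerivAt (fun x ↦ biNormalDensity r x y)
      (biNormalDensity r x y * ((r * y - x) / (1 - r ^ 2))) x := by
  have hq : HasDerivAt (fun x ↦ -(x ^ 2 - 2 * r * x * y + y ^ 2) / (2 * (1 - r ^ 2)))
      ((r * y - x) / (1 - r ^ 2)) x := by
    refine ((((hasDerivAt_pow 2 x).sub ((hasDerivAt_id x).const_mul (2 * r) |>.mul_const y))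
      |>.add_const (y ^ 2)).neg.div_const (2 * (1 - r ^ 2))).congr_deriv ?_
    simp only [Nat.cast_ofNat, Nat.add_one_sub_one, pow_one, mul_one]
    generalize 1 - r ^ 2 = d
    ring
  exact (hq.exp.const_mul _).congr_deriv (by rw [biNormalDensity]; ring)

lemma hasDerivAt_sub_mul_div_sqrt_one_sub_sq {r : ℝ} (hr : r ^ 2 < 1) (x y : ℝ) :
    HasDerivAt (fun ρ ↦ (y - ρ * x) / √(1 - ρ ^ 2))
      ((r * y - x) / ((1 - r ^ 2) * √(1 - r ^ 2))) r := by
  have h1 : 0 < 1 - r ^ 2 := by linarith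
  have hs : √(1 - r ^ 2) ≠ 0 := (sqrt_pos.2 h1).ne'
  have hsqrt := ((hasDerivAt_pow 2 r).const_sub 1).sqrt h1.ne'
  refine (((hasDerivAt_mul_const x).const_sub y).div hsqrt hs).congr_deriv ?_
  field_simp
  rw [sq_sqrt h1.le]
  ring

lemma hasDerivAt_mul_stdNormalCDF {r : ℝ} (hr : r ^ 2 < 1) (x y : ℝ) :
    HasDerivAt (fun ρ ↦ φ x * stdNormalCDF ((y - ρ * x) / √(1 - ρ ^ 2)))
      (biNormalDensity r x y * ((r * y - x) / (1 - r ^ 2))) r := by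
  have h1 : 0 < 1 - r ^ 2 := by linarith
  have hs : √(1 - r ^ 2) ≠ 0 := (sqrt_pos.2 h1).ne'
  refine (((hasDerivAt_stdNormalCDF _).comp r
    (hasDerivAt_sub_mul_div_sqrt_one_sub_sq hr x y)).const_mul (φ x)).congr_deriv ?_
  rw [biNormalDensity_eq_mul hr]
  field_simp

lemma norm_biNormalDensity_mul_le {ρ δ : ℝ} (hδ : 0 < δ) (hρ : δ ≤ 1 - ρ ^ 2) (x y : ℝ) :
    ‖biNormalDensity ρ x y * ((ρ * y - x) / (1 - ρ ^ 2))‖ ≤ (|y| + |x|) * φ x / (δ * √δ) := by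
  have hρ2 : ρ ^ 2 < 1 := by linarith
  have habs : |ρ * y - x| ≤ |y| + |x| := by
    calc |ρ * y - x| ≤ |ρ| * |y| + |x| := by simpa [abs_mul] using abs_sub (ρ * y) x
      _ ≤ |y| + |x| := by
        gcongr
        exact mul_le_of_le_one_left (abs_nonneg _)
          (abs_le_one_iff_mul_self_le_one.2 (by nlinarith))
  have hdens : biNormalDensity ρ x y ≤ φ x / √δ :=
    (biNormalDensity_le hρ2 x y).trans
      (div_le_div_of_nonneg_left (gaussianPDFReal_nonneg _ _ _) (sqrt_pos.2 hδ) (sqrt_le_sqrt hρ))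
  rw [norm_mul, norm_div, norm_eq_abs, norm_eq_abs, norm_eq_abs,
    abs_of_nonneg (biNormalDensity_nonneg _ _ _), abs_of_pos (by linarith : 0 < 1 - ρ ^ 2)]
  calc biNormalDensity ρ x y * (|ρ * y - x| / (1 - ρ ^ 2))
      ≤ φ x / √δ * ((|y| + |x|) / δ) := by
        have hφ : 0 ≤ φ x / √δ := div_nonneg (gaussianPDFReal_nonneg _ _ _) (sqrt_nonneg _)
        gcongr
      _ = (|y| + |x|) * φ x / (δ * √δ) := by ring

lemma integrable_add_abs_mul_gaussianPDFReal_zero_one_div (c y : ℝ) :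
    Integrable fun x ↦ (|y| + |x|) * φ x / c := by
  have h := ((integrable_gaussianPDFReal 0 1).const_mul |y|).add
    integrable_abs_mul_gaussianPDFReal_zero_one
  exact (h.div_const c).congr (ae_of_all _ fun x ↦ by simp only [Pi.add_apply]; ring)

lemma integral_Iic_biNormalDensity_mul {r : ℝ} (hr : r ^ 2 < 1) (t y : ℝ) :
    ∫ x in Iic t, biNormalDensity r x y * ((r * y - x) / (1 - r ^ 2)) = biNormalDensity r t y := by
  have h1 : 0 < 1 - r ^ 2 := by linarith
  have hint : Integrable fun x ↦ biNormalDensity r x y * ((r * y - x) / (1 - r ^ 2)) :=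
    (integrable_add_abs_mul_gaussianPDFReal_zero_one_div _ y).mono'
      (by unfold biNormalDensity; fun_prop : Continuous _).aestronglyMeasurable
      (ae_of_all _ fun x ↦ norm_biNormalDensity_mul_le h1 le_rfl x y)
  have hderiv (x : ℝ) (_ : x ∈ Iic t) := hasDerivAt_biNormalDensity_left r x y
  rw [integral_Iic_of_hasDerivAt_of_tendsto' hderiv hint.integrableOn
    (tendsto_zero_of_hasDerivAt_of_integrableOn_Iic hderiv hint.integrableOn
      (integrable_biNormalDensity_left hr y).integrableOn), sub_zero]

lemma hasDerivAt_biNormalCDF {r : ℝ} (hr : r ∈ Ioo (-1) 1) (t₁ t₂ : ℝ) :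
    HasDerivAt (fun ρ ↦ biNormalCDF ρ t₁ t₂) (biNormalDensity r t₁ t₂) r := by
  have hr2 : r ^ 2 < 1 := (sq_lt_one_iff_abs_lt_one r).2 (abs_lt.2 hr)
  set δ := (1 - r ^ 2) / 2
  have hδ : 0 < δ := by simp only [δ]; linarith
  set s := {ρ : ℝ | δ < 1 - ρ ^ 2}
  have hs : s ∈ 𝓝 r :=
    (isOpen_lt continuous_const (by fun_prop)).mem_nhds (by simp only [mem_ofPred_eq, δ]; linarith)
  have hs_sq (ρ : ℝ) (hρ : ρ ∈ s) : ρ ^ 2 < 1 := by linarith [show δ < 1 - ρ ^ 2 from hρ]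
  have hF_cont (ρ : ℝ) : Continuous fun x ↦ φ x * stdNormalCDF ((t₂ - ρ * x) / √(1 - ρ ^ 2)) :=
    continuous_gaussianPDFReal_zero_one.mul (continuous_stdNormalCDF.comp (by fun_prop))
  have hF_int : Integrable (fun x ↦ φ x * stdNormalCDF ((t₂ - r * x) / √(1 - r ^ 2)))
      (volume.restrict (Iic t₁)) := by
    refine (integrable_gaussianPDFReal 0 1).restrict.mono' (hF_cont r).aestronglyMeasurable
      (ae_of_all _ fun x ↦ ?_)
    rw [norm_mul, norm_of_nonneg (gaussianPDFReal_nonneg _ _ _), stdNormalCDF_eq_cdf,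
      norm_of_nonneg (cdf_nonneg _ _)]
    exact mul_le_of_le_one_right (gaussianPDFReal_nonneg _ _ _) (cdf_le_one _ _)
  obtain ⟨-, hmain⟩ := hasDerivAt_integral_of_dominated_loc_of_deriv_le
    (F' := fun ρ x ↦ biNormalDensity ρ x t₂ * ((ρ * t₂ - x) / (1 - ρ ^ 2)))
    (bound := fun x ↦ (|t₂| + |x|) * φ x / (δ * √δ)) hs
    (Eventually.of_forall fun ρ ↦ (hF_cont ρ).aestronglyMeasurable) hF_int
    (by unfold biNormalDensity; fun_prop : Continuous _).aestronglyMeasurable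
    (ae_of_all _ fun x ρ hρ ↦ norm_biNormalDensity_mul_le hδ hρ.le x t₂)
    (integrable_add_abs_mul_gaussianPDFReal_zero_one_div _ t₂).restrict
    (ae_of_all _ fun x ρ hρ ↦ hasDerivAt_mul_stdNormalCDF (hs_sq ρ hρ) x t₂)
  rw [integral_Iic_biNormalDensity_mul hr2] at hmain
  exact hmain.congr_of_eventuallyEq (eventually_of_mem hs fun ρ hρ ↦
    biNormalCDF_eq_integral (abs_lt.1 ((sq_lt_one_iff_abs_lt_one ρ).1 (hs_sq ρ hρ))) t₁ t₂)

/-- Drezner–Wesolowsky formula: for `ρ ∈ (-1, 1)`,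
`Φ_ρ(t₁,t₂) = (1/2π) ∫₀^ρ (1/√(1-r²)) exp(-(t₁²-2rt₁t₂+t₂²)/(2(1-r²))) dr + Φ(t₁)Φ(t₂)`. -/
theorem biNormalCDF_drezner_wesolowsky (ρ t₁ t₂ : ℝ) (hρ : ρ ∈ Set.Ioo (-1 : ℝ) 1) :
    biNormalCDF ρ t₁ t₂ =
      (1 / (2 * Real.pi)) * (∫ r in (0 : ℝ)..ρ,
        (1 / Real.sqrt (1 - r ^ 2)) *
          Real.exp (-(t₁ ^ 2 - 2 * r * t₁ * t₂ + t₂ ^ 2) / (2 * (1 - r ^ 2)))) +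
      stdNormalCDF t₁ * stdNormalCDF t₂ := by
  have hsub : uIcc 0 ρ ⊆ Ioo (-1) 1 :=
    ordConnected_Ioo.uIcc_subset (by norm_num) hρ
  have hFTC := intervalIntegral.integral_eq_sub_of_hasDerivAt
    (fun r hr ↦ hasDerivAt_biNormalCDF (hsub hr) t₁ t₂)
    ((continuousOn_biNormalDensity t₁ t₂).mono hsub).intervalIntegrable
  have hdensity (r : ℝ) : 1 / (2 * π) * (1 / √(1 - r ^ 2) *
      exp (-(t₁ ^ 2 - 2 * r * t₁ * t₂ + t₂ ^ 2) / (2 * (1 - r ^ 2))))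
        = biNormalDensity r t₁ t₂ := by
    rw [biNormalDensity]
    ring
  rw [← intervalIntegral.integral_const_mul, ← biNormalCDF_zero]
  simp only [hdensity, hFTC]
  ring
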